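/- Let p be a prime, 0 ≤ n < m, k ≥ 1, and let χ1,…,χk be characters mod p^m with χ_k primitive mod p^m. Suppose χ1⋯χk is induced by a character ψ mod p^{m−n}. Then J_{p^n}(χ1,…,χk,p^m) = p^n · (conj G(ψ, p^{m−n}) / conj G(χ_k, p^m)) · ∏_{i=1}^{k−1} G(χ_i, p^m), where conj denotes complex conjugation. -/

import Mathlib

open Complex

/-- The generalized Jacobi sum `J_B(χ₁,…,χ_k, q)`. -/
noncomputable def Jsum {q : ℕ} [NeZero q] {k : ℕ}
    (χ : Fin k → DirichletCharacter ℂ q) (B : ZMod q) : ℂ :=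
  ∑ x : Fin k → ZMod q, if (∑ i, x i) = B then ∏ i, χ i (x i) else 0

/-- The Gauss sum `G(χ,q) = ∑_{x mod q} χ(x) e^{2πi x/q}`. -/
noncomputable def Gsum {q : ℕ} [NeZero q] (χ : DirichletCharacter ℂ q) : ℂ :=
  ∑ x : ZMod q, χ x * Complex.exp (2 * Real.pi * Complex.I * (x.val : ℂ) / q)

/-!
Write `q = p ^ m` and `e_t(x) = e^{2πi t x / q}`. Orthogonality of additive characters gives
`q · J_B = ∑_t e(-t B) ∏_i G(χ_i, e_t)`. Since `χ_k` is primitive, `G(χ_k, e_t)` vanishes at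
non-units `t`, and at units `G(χ_i, e_t) = χ_i⁻¹(t) G(χ_i)`; so the product is
`(χ_1 ⋯ χ_k)⁻¹(t) ∏_i G(χ_i) = ψ⁻¹(t mod p^{m-n}) ∏_i G(χ_i)`. For `B = p ^ n` the remaining
sum over `t` only sees `t mod p^{m-n}`, each residue having `p ^ n` lifts, and equals
`p ^ n · conj G(ψ)`. Finally `q = G(χ_k) · conj G(χ_k)` for primitive `χ_k`.
-/

open ZMod AddChar DirichletCharacter

theorem AddChar.map_sum_eq_prod {A M ι : Type*} [AddCommMonoid A] [CommMonoid M]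
    (ψ : AddChar A M) (s : Finset ι) (f : ι → A) : ψ (∑ i ∈ s, f i) = ∏ i ∈ s, ψ (f i) := by
  classical
  induction s using Finset.cons_induction with
  | empty => simp
  | cons i s hi ih => rw [Finset.sum_cons, Finset.prod_cons, map_add_eq_mul, ih]

theorem prod_gaussSum_mulShift_of_isUnit {R R' ι : Type*} [CommRing R] [Fintype R]
    [CommRing R'] (s : Finset ι) (χ : ι → MulChar R R') (ψ : AddChar R R') {a : R}
    (ha : IsUnit a) :
    ∏ i ∈ s, gaussSum (χ i) (ψ.mulShift a) =
      (∏ i ∈ s, χ i)⁻¹ a * ∏ i ∈ s, gaussSum (χ i) ψ := by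
  classical
  induction s using Finset.cons_induction with
  | empty => simp [MulChar.one_apply ha]
  | cons i s hi ih =>
    rw [Finset.prod_cons, Finset.prod_cons, Finset.prod_cons, ih, mul_inv, MulChar.mul_apply,
      ← ha.unit_spec, gaussSum_mulShift_eq]
    ring

theorem prod_gaussSum_mulShift_of_isPrimitive {N : ℕ} [NeZero N] {R ι : Type*} [CommRing R]
    [IsDomain R] [Fintype ι] (χ : ι → DirichletCharacter R N) (e : AddChar (ZMod N) R) {j : ι}
    (hj : (χ j).IsPrimitive) (a : ZMod N) :
    ∏ i, gaussSum (χ i) (e.mulShift a) = (∏ i, χ i)⁻¹ a * ∏ i, gaussSum (χ i) e := by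
  by_cases ha : IsUnit a
  · exact prod_gaussSum_mulShift_of_isUnit _ χ e ha
  · rw [MulChar.map_nonunit _ ha, zero_mul]
    refine Finset.prod_eq_zero (Finset.mem_univ j) ?_
    rw [gaussSum_mulShift_of_isPrimitive e hj, MulChar.map_nonunit _ ha, zero_mul]

theorem ZMod.stdAddChar_mul_natCast {M N d : ℕ} [NeZero M] [NeZero N] (hN : M * d = N)
    (t : ZMod N) :
    stdAddChar (t * (d : ZMod N)) = stdAddChar (castHom (Dvd.intro d hN) (ZMod M) t) := by
  obtain ⟨v, rfl⟩ := ZMod.intCast_surjective t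
  have hd : (d : ℂ) ≠ 0 := by
    rintro h
    exact NeZero.ne N (by rw [← hN, Nat.cast_eq_zero.1 h, mul_zero])
  rw [map_intCast, ← Int.cast_natCast, ← Int.cast_mul, stdAddChar_coe, stdAddChar_coe, ← hN]
  congr 1
  push_cast
  field_simp

theorem ZMod.sum_comp_castHom {M N : ℕ} [NeZero M] [NeZero N] {A : Type*} [AddCommMonoid A]
    (h : M ∣ N) (f : ZMod M → A) :
    ∑ t : ZMod N, f (castHom h (ZMod M) t) = (N / M) • ∑ s, f s := by
  classical
  set g := castHom h (ZMod M)
  have hfiber : ∀ s, (Finset.univ.filter fun t => g t = s).card = N / M := by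
    have hconst : ∀ s, (Finset.univ.filter fun t => g t = s).card =
        (Finset.univ.filter fun t => g t = 0).card := fun s =>
      AddMonoidHom.card_fiber_eq_of_mem_range g.toAddMonoidHom (castHom_surjective h s)
        (castHom_surjective h 0)
    have htotal := Finset.card_eq_sum_card_fiberwise (s := Finset.univ) (t := Finset.univ)
      (f := g) fun _ _ => Finset.mem_univ _
    simp only [hconst, Finset.sum_const, Finset.card_univ, ZMod.card, smul_eq_mul] at htotal ⊢
    exact fun _ =>
      (Nat.div_eq_of_eq_mul_left (NeZero.pos M) (htotal.trans (mul_comm _ _))).symm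
  rw [← Finset.sum_fiberwise Finset.univ g, Finset.smul_sum]
  refine Finset.sum_congr rfl fun s _ => ?_
  rw [Finset.sum_congr rfl fun t ht => by rw [(Finset.mem_filter.1 ht).2], Finset.sum_const,
    hfiber]

theorem ZMod.isUnit_of_isUnit_castHom_pow {p j m : ℕ} [NeZero (p ^ m)] (hj : 0 < j)
    (hjm : j ≤ m) {t : ZMod (p ^ m)}
    (ht : IsUnit (castHom (pow_dvd_pow p hjm) (ZMod (p ^ j)) t)) : IsUnit t := by
  rw [← ZMod.natCast_zmod_val t, map_natCast, ZMod.isUnit_iff_coprime,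
    Nat.coprime_pow_right_iff hj] at ht
  rw [← ZMod.natCast_zmod_val t, ZMod.isUnit_iff_coprime]
  exact ht.pow_right m

theorem DirichletCharacter.changeLevel_pow_apply {R : Type*} [CommMonoidWithZero R]
    {p j m : ℕ} [NeZero (p ^ m)] (hj : 0 < j) (hjm : j ≤ m) (ψ : DirichletCharacter R (p ^ j))
    (t : ZMod (p ^ m)) :
    changeLevel (pow_dvd_pow p hjm) ψ t = ψ (castHom (pow_dvd_pow p hjm) (ZMod (p ^ j)) t) := by
  by_cases ht : IsUnit t
  · simpa [ht.unit_spec] using changeLevel_eq_cast_of_dvd ψ (pow_dvd_pow p hjm) ht.unit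
  · rw [MulChar.map_nonunit _ ht, MulChar.map_nonunit]
    exact fun h => ht (isUnit_of_isUnit_castHom_pow hj hjm h)

section Level

variable {N : ℕ} [NeZero N]

theorem Gsum_eq_gaussSum (χ : DirichletCharacter ℂ N) : Gsum χ = gaussSum χ stdAddChar := by
  refine Finset.sum_congr rfl fun x _ => ?_
  rw [stdAddChar_apply, toCircle_apply]

/-- Fourier inversion `𝓕⁻ (𝓕 χ) = χ` at `1`, with `𝓕 χ = χ⁻¹(-·) · G(χ)` for primitive `χ`. -/
theorem DirichletCharacter.IsPrimitive.gaussSum_mul_star_gaussSum {χ : DirichletCharacter ℂ N}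
    (hχ : χ.IsPrimitive) : gaussSum χ stdAddChar * star (gaussSum χ stdAddChar) = N := by
  calc gaussSum χ stdAddChar * star (gaussSum χ stdAddChar)
      = ∑ j, stdAddChar (j * 1) • 𝓕 (χ : ZMod N → ℂ) j := by
        rw [star_gaussSum_eq]
        unfold gaussSum
        rw [Finset.mul_sum]
        refine Fintype.sum_equiv (Equiv.neg _) _ _ fun j => ?_
        simp only [AddChar.inv_apply, Equiv.neg_apply, mul_one, neg_neg, smul_eq_mul,
          hχ.fourierTransform_eq_inv_mul_gaussSum, gaussSum]
        ring
    _ = N * 𝓕⁻ (𝓕 (χ : ZMod N → ℂ)) 1 := by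
        rw [invDFT_apply, smul_eq_mul, mul_inv_cancel_left₀ (NeZero.ne _)]
    _ = N := by simp

theorem natCast_mul_Jsum {k : ℕ} (χ : Fin k → DirichletCharacter ℂ N) (B : ZMod N) :
    N * Jsum χ B =
      ∑ t, stdAddChar (-(t * B)) * ∏ i, gaussSum (χ i) (stdAddChar.mulShift t) := by
  classical
  simp only [gaussSum, mulShift_apply, Finset.prod_univ_sum, Fintype.piFinset_univ,
    Finset.mul_sum]
  rw [Finset.sum_comm, Jsum, Finset.mul_sum]
  refine Finset.sum_congr rfl fun x _ => ?_
  have hterm : ∀ t : ZMod N,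
      stdAddChar (-(t * B)) * ∏ i, χ i (x i) * stdAddChar (t * x i) =
        (∏ i, χ i (x i)) * stdAddChar (t * (∑ i, x i - B)) := by
    intro t
    rw [Finset.prod_mul_distrib, ← AddChar.map_sum_eq_prod, mul_left_comm, ← map_add_eq_mul,
      ← Finset.mul_sum]
    ring_nf
  rw [Finset.sum_congr rfl fun t _ => hterm t, ← Finset.mul_sum,
    sum_mulShift _ (isPrimitive_stdAddChar N)]
  split_ifs with h <;> simp_all [sub_eq_zero, mul_comm]

end Level

theorem sum_changeLevel_inv_mul_stdAddChar {p m n : ℕ} [NeZero (p ^ m)]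
    [NeZero (p ^ (m - n))] (hnm : n < m) (ψ : DirichletCharacter ℂ (p ^ (m - n))) :
    ∑ t : ZMod (p ^ m), (changeLevel (pow_dvd_pow p (Nat.sub_le m n)) ψ)⁻¹ t *
        stdAddChar (-(t * ((p ^ n : ℕ) : ZMod (p ^ m)))) =
      p ^ n * star (gaussSum ψ stdAddChar) := by
  have hN : p ^ (m - n) * p ^ n = p ^ m := by rw [← pow_add, Nat.sub_add_cancel hnm.le]
  have hterm : ∀ t : ZMod (p ^ m), (changeLevel (pow_dvd_pow p (Nat.sub_le m n)) ψ)⁻¹ t *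
      stdAddChar (-(t * ((p ^ n : ℕ) : ZMod (p ^ m)))) =
      (fun s => ψ⁻¹ s * stdAddChar (-s)) (castHom (pow_dvd_pow p (Nat.sub_le m n)) _ t) := by
    intro t
    rw [← map_inv, changeLevel_pow_apply (Nat.sub_pos_of_lt hnm) (Nat.sub_le m n), ← neg_mul,
      stdAddChar_mul_natCast hN, map_neg]
  rw [Finset.sum_congr rfl fun t _ => hterm t,
    sum_comp_castHom (pow_dvd_pow p (Nat.sub_le m n)) (fun s => ψ⁻¹ s * stdAddChar (-s)), ← hN,
    Nat.mul_div_cancel_left _ (NeZero.pos _), star_gaussSum_eq, gaussSum]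
  simp [nsmul_eq_mul]

/-- The paper's `k` characters are `χ 0, …, χ (Fin.last k)` here, so its `k` is `k + 1`. -/
theorem stmt13_general {p m n k : ℕ} [NeZero (p ^ m)] [NeZero (p ^ (m - n))]
    (hnm : n < m)
    (χ : Fin (k + 1) → DirichletCharacter ℂ (p ^ m))
    (hlast : (χ (Fin.last k)).IsPrimitive)
    -- χ₁⋯χ_k is induced by a character ψ mod p^(m-n)
    (ψ : DirichletCharacter ℂ (p ^ (m - n)))
    (hind : ∏ i, χ i = DirichletCharacter.changeLevel
      (pow_dvd_pow p (Nat.sub_le m n)) ψ) :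
    Jsum χ ((p ^ n : ℕ) : ZMod (p ^ m)) =
      (p : ℂ) ^ n *
        ((starRingEnd ℂ) (Gsum ψ) / (starRingEnd ℂ) (Gsum (χ (Fin.last k)))) *
        ∏ i : Fin k, Gsum (χ i.castSucc) := by
  have hG := hlast.gaussSum_mul_star_gaussSum
  have hG0 : gaussSum (χ (Fin.last k)) stdAddChar * star (gaussSum (χ (Fin.last k)) stdAddChar)
      ≠ 0 := hG ▸ Nat.cast_ne_zero.2 (NeZero.ne _)
  have hJ : ((p ^ m : ℕ) : ℂ) * Jsum χ ((p ^ n : ℕ) : ZMod (p ^ m)) =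
      p ^ n * star (gaussSum ψ stdAddChar) * ∏ i, gaussSum (χ i) stdAddChar := by
    rw [natCast_mul_Jsum, ← sum_changeLevel_inv_mul_stdAddChar hnm, Finset.sum_mul]
    refine Finset.sum_congr rfl fun t _ => ?_
    rw [prod_gaussSum_mulShift_of_isPrimitive χ _ hlast, hind]
    ring
  rw [← hG, Fin.prod_univ_castSucc] at hJ
  simp only [Gsum_eq_gaussSum, starRingEnd_apply]
  rw [mul_div_assoc', div_mul_eq_mul_div, eq_div_iff (right_ne_zero_of_mul hG0)]
  exact mul_left_cancel₀ (left_ne_zero_of_mul hG0) (by linear_combination hJ)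

/-- Here the `k+1 ≥ 1` characters are `χ 0, …, χ (Fin.last k)`, the last one,
`χ (Fin.last k)`, being primitive. -/
theorem stmt13 {p m n k : ℕ} [NeZero (p ^ m)] [NeZero (p ^ (m - n))]
    (hp : p.Prime) (hnm : n < m)
    (χ : Fin (k + 1) → DirichletCharacter ℂ (p ^ m))
    (hlast : (χ (Fin.last k)).IsPrimitive)
    -- χ₁⋯χ_k is induced by a character ψ mod p^(m-n)
    (ψ : DirichletCharacter ℂ (p ^ (m - n)))
    (hind : ∏ i, χ i = DirichletCharacter.changeLevel
      (pow_dvd_pow p (Nat.sub_le m n)) ψ) :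
    Jsum χ ((p ^ n : ℕ) : ZMod (p ^ m)) =
      (p : ℂ) ^ n *
        ((starRingEnd ℂ) (Gsum ψ) / (starRingEnd ℂ) (Gsum (χ (Fin.last k)))) *
        ∏ i : Fin k, Gsum (χ i.castSucc) :=
  stmt13_general hnm χ hlast ψ hind
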